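/- (Uniform Normal Cone property of 𝒟_{ij} on 𝒜_g^σ.) Let n ≥ 2 be an integer, σ > 0, 0 < r_- < r_+, and i ≠ j indices in {1,…,n}. Let β ∈ (0,1) and let δ > 0 satisfy δ ≤ (r_-(1+σ²)/√2)·(1 − √(1−β²)). Then for all 𝐱, 𝐲 ∈ 𝒜_g^σ with |x_i−x_j| = σ(x̌_i+x̌_j), |y_i−y_j| = σ(y̌_i+y̌_j) and ‖𝐱 − 𝐲‖ ≤ δ, one has ⟨𝐧_{ij}(𝐲), 𝐧_{ij}(𝐱)⟩ ≥ √(1−β²). -/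

import Mathlib

open scoped RealInnerProductSpace

noncomputable section

/-- A globule: a point of `ℝ³ × ℝ` with the Euclidean (L²) norm;
the first component is the center, the second the radius. -/
abbrev Glob : Type := WithLp 2 (EuclideanSpace ℝ (Fin 3) × ℝ)

/-- The configuration space of `n` globules, `(ℝ³ × ℝ)ⁿ` with the Euclidean norm. -/
abbrev Conf (n : ℕ) : Type := PiLp 2 (fun _ : Fin n => Glob)

/-- The center of the `i`-th globule. -/
def ctr {n : ℕ} (x : Conf n) (i : Fin n) : EuclideanSpace ℝ (Fin 3) :=
  (WithLp.equiv 2 (EuclideanSpace ℝ (Fin 3) × ℝ) (x i)).1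

/-- The radius of the `i`-th globule. -/
def rad {n : ℕ} (x : Conf n) (i : Fin n) : ℝ :=
  (WithLp.equiv 2 (EuclideanSpace ℝ (Fin 3) × ℝ) (x i)).2

/-- The vector `𝐰` at a configuration `x`: its `i`-th center component is
`(x_i - x_j)/(σ(x̌_i + x̌_j))`, its `j`-th center component is the opposite,
its radius components at `i` and `j` are `-σ`, all other components vanish. -/
def wvec (σ : ℝ) {n : ℕ} (i j : Fin n) (x : Conf n) : Conf n := WithLp.toLp 2 fun k =>
  (WithLp.equiv 2 (EuclideanSpace ℝ (Fin 3) × ℝ)).symm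
    (if k = i then (σ * (rad x i + rad x j))⁻¹ • (ctr x i - ctr x j)
      else if k = j then (σ * (rad x i + rad x j))⁻¹ • (ctr x j - ctr x i)
      else 0,
     if k = i ∨ k = j then -σ else 0)

/-- The inward normal vector `𝐧_{ij}(x) = 𝐰/√(2+2σ²)`. -/
def nvec (σ : ℝ) {n : ℕ} (i j : Fin n) (x : Conf n) : Conf n :=
  (Real.sqrt (2 + 2 * σ ^ 2))⁻¹ • wvec σ i j x

/-- The set `𝒟_{ij} = {𝐱 : |x_i - x_j| ≥ σ(x̌_i + x̌_j)}`. -/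
def Dset (σ : ℝ) {n : ℕ} (i j : Fin n) : Set (Conf n) :=
  {x | σ * (rad x i + rad x j) ≤ ‖ctr x i - ctr x j‖}

/-- The set `𝒜_g^σ` of allowed (rescaled) configurations. -/
def AgSet (σ rm rp : ℝ) (n : ℕ) : Set (Conf n) :=
  {x | (∀ i, rm / σ ≤ rad x i ∧ rad x i ≤ rp / σ) ∧
    ∀ i j : Fin n, i ≠ j → σ * (rad x i + rad x j) ≤ ‖ctr x i - ctr x j‖}

/-- The function `f(𝐱) = |x_i - x_j| - σ(x̌_i + x̌_j)`. -/
def fij (σ : ℝ) {n : ℕ} (i j : Fin n) (x : Conf n) : ℝ :=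
  ‖ctr x i - ctr x j‖ - σ * (rad x i + rad x j)

end

/-!
On the contact set `|x_i - x_j| = σ(x̌_i + x̌_j)` the center part of `𝐰(𝐱)` is the unit vector
`u_x = (x_i - x_j)/|x_i - x_j|`, and `⟨𝐧(𝐲), 𝐧(𝐱)⟩ = (⟨u_y, u_x⟩ + σ²)/(1 + σ²)`. For unit vectors
`1 - ⟨u, v⟩ = |u - v|²/2 ≤ |u - v|`; normalization is `2/|a|`-Lipschitz at `a`, and here
`|a| ≥ 2r_-`; and `x_i - x_j` moves by at most `√2‖𝐱 - 𝐲‖`. Hence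
`1 - ⟨u_y, u_x⟩ ≤ √2 δ / r_- ≤ (1 + σ²)(1 - √(1 - β²))`, which rearranges to the claim.
-/
theorem one_sub_inner_le_norm_sub {F : Type*} [NormedAddCommGroup F] [InnerProductSpace ℝ F]
    {u v : F} (hu : ‖u‖ = 1) (hv : ‖v‖ = 1) : 1 - ⟪u, v⟫ ≤ ‖u - v‖ := by
  have hsq : ‖u - v‖ ^ 2 = 2 * (1 - ⟪u, v⟫) := by rw [norm_sub_sq_real, hu, hv]; ring
  have hle : ‖u - v‖ ≤ 2 := by linarith [norm_sub_le u v]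
  nlinarith [norm_nonneg (u - v)]

theorem norm_inv_norm_smul_sub_le {E : Type*} [NormedAddCommGroup E] [NormedSpace ℝ E]
    {a : E} (ha : a ≠ 0) (b : E) :
    ‖‖a‖⁻¹ • a - ‖b‖⁻¹ • b‖ ≤ 2 * ‖a - b‖ / ‖a‖ := by
  have hdecomp : ‖a‖⁻¹ • a - ‖b‖⁻¹ • b = ‖a‖⁻¹ • ((a - b) + (‖b‖ - ‖a‖) • ‖b‖⁻¹ • b) := by
    rcases eq_or_ne b 0 with rfl | hb
    · simp
    · have : ‖a‖ ≠ 0 := norm_ne_zero_iff.mpr ha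
      have : ‖b‖ ≠ 0 := norm_ne_zero_iff.mpr hb
      match_scalars
      · field_simp
      · field_simp
        ring
  have hunit : ‖‖b‖⁻¹ • b‖ ≤ 1 := by
    simpa using (inv_norm_smul_mem_unitClosedBall b)
  rw [hdecomp, norm_smul, norm_inv, norm_norm, inv_mul_eq_div]
  gcongr
  calc ‖a - b + (‖b‖ - ‖a‖) • ‖b‖⁻¹ • b‖
      ≤ ‖a - b‖ + |‖b‖ - ‖a‖| * ‖‖b‖⁻¹ • b‖ := by
        grw [norm_add_le, norm_smul, Real.norm_eq_abs]
    _ ≤ ‖a - b‖ + ‖a - b‖ * 1 := by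
        gcongr
        rw [abs_sub_comm]; exact abs_norm_sub_norm_le a b
    _ = 2 * ‖a - b‖ := by ring

theorem PiLp.norm_sub_apply_le {ι E : Type*} [Fintype ι] [SeminormedAddCommGroup E]
    (f : PiLp 2 (fun _ : ι => E)) {i j : ι} (hij : i ≠ j) :
    ‖f i - f j‖ ≤ √2 * ‖f‖ := by
  have hpair : ‖f i‖ ^ 2 + ‖f j‖ ^ 2 ≤ ‖f‖ ^ 2 := by
    rw [PiLp.norm_sq_eq_of_L2]
    exact Finset.add_le_sum (fun k _ => sq_nonneg ‖f k‖) (Finset.mem_univ i)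
      (Finset.mem_univ j) hij
  have hsq : (‖f i‖ + ‖f j‖) ^ 2 ≤ (√2 * ‖f‖) ^ 2 := by
    rw [mul_pow, Real.sq_sqrt zero_le_two]
    nlinarith [sq_nonneg (‖f i‖ - ‖f j‖)]
  calc ‖f i - f j‖ ≤ ‖f i‖ + ‖f j‖ := norm_sub_le _ _
    _ ≤ √2 * ‖f‖ := le_of_sq_le_sq hsq (by positivity)

theorem norm_ctr_sub_sub_le {n : ℕ} (x y : Conf n) {i j : Fin n} (hij : i ≠ j) :
    ‖(ctr x i - ctr x j) - (ctr y i - ctr y j)‖ ≤ √2 * ‖x - y‖ :=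
  calc ‖(ctr x i - ctr x j) - (ctr y i - ctr y j)‖
        = ‖(WithLp.ofLp ((x - y) i - (x - y) j)).1‖ := by
        simp only [ctr, WithLp.equiv_apply, PiLp.sub_apply, WithLp.ofLp_sub, Prod.fst_sub]
        abel_nf
    _ ≤ ‖(x - y) i - (x - y) j‖ := WithLp.norm_fst_le (x := _)
    _ ≤ √2 * ‖x - y‖ := PiLp.norm_sub_apply_le _ hij

theorem two_mul_le_of_mem_AgSet {σ rm rp : ℝ} (hσ : 0 < σ) {n : ℕ} {x : Conf n}
    (hx : x ∈ AgSet σ rm rp n) (i j : Fin n) : 2 * rm ≤ σ * (rad x i + rad x j) := by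
  have hi := (div_le_iff₀' hσ).mp (hx.1 i).1
  have hj := (div_le_iff₀' hσ).mp (hx.1 j).1
  linarith

noncomputable def ctrDir (σ : ℝ) {n : ℕ} (i j : Fin n) (x : Conf n) : EuclideanSpace ℝ (Fin 3) :=
  (σ * (rad x i + rad x j))⁻¹ • (ctr x i - ctr x j)

theorem inner_wvec (σ : ℝ) {n : ℕ} {i j : Fin n} (hij : i ≠ j) (x y : Conf n) :
    ⟪wvec σ i j y, wvec σ i j x⟫ = 2 * ⟪ctrDir σ i j y, ctrDir σ i j x⟫ + 2 * σ ^ 2 := by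
  have hsupp : ∀ k ∉ ({i, j} : Finset (Fin n)), ⟪wvec σ i j y k, wvec σ i j x k⟫ = 0 := by
    intro k hk
    simp only [Finset.mem_insert, Finset.mem_singleton, not_or] at hk
    simp [wvec, hk.1, hk.2]
  rw [PiLp.inner_apply, ← Finset.sum_subset (Finset.subset_univ _) (fun k _ hk => hsupp k hk),
    Finset.sum_pair hij]
  have hwi : ∀ z, wvec σ i j z i = WithLp.toLp 2 (ctrDir σ i j z, -σ) := fun z => by
    simp [wvec, ctrDir]
  have hwj : ∀ z, wvec σ i j z j = WithLp.toLp 2 (-ctrDir σ i j z, -σ) := fun z => by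
    simp [wvec, ctrDir, hij.symm, ← smul_neg]
  rw [hwi, hwi, hwj, hwj]
  simp only [WithLp.prod_inner_apply, inner_neg_neg, RCLike.inner_apply, conj_trivial]
  ring

theorem inner_nvec (σ : ℝ) {n : ℕ} {i j : Fin n} (hij : i ≠ j) (x y : Conf n) :
    ⟪nvec σ i j y, nvec σ i j x⟫ = (⟪ctrDir σ i j y, ctrDir σ i j x⟫ + σ ^ 2) / (1 + σ ^ 2) := by
  have hpos : (0 : ℝ) < 2 + 2 * σ ^ 2 := by positivity
  rw [nvec, nvec, real_inner_smul_left, real_inner_smul_right, inner_wvec σ hij, ← mul_assoc,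
    ← mul_inv, Real.mul_self_sqrt hpos.le]
  field_simp

theorem statement7_general (n : ℕ) (σ : ℝ) (hσ : 0 < σ) (rm rp : ℝ)
    (hrm : 0 < rm) (i j : Fin n) (hij : i ≠ j)
    (β : ℝ) (δ : ℝ)
    (hδ : δ ≤ rm * (1 + σ ^ 2) / Real.sqrt 2 * (1 - Real.sqrt (1 - β ^ 2)))
    (x y : Conf n) (hx : x ∈ AgSet σ rm rp n) (hy : y ∈ AgSet σ rm rp n)
    (hcx : ‖ctr x i - ctr x j‖ = σ * (rad x i + rad x j))
    (hcy : ‖ctr y i - ctr y j‖ = σ * (rad y i + rad y j))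
    (hxy : ‖x - y‖ ≤ δ) :
    ⟪nvec σ i j y, nvec σ i j x⟫ ≥ Real.sqrt (1 - β ^ 2) := by
  set c := Real.sqrt (1 - β ^ 2)
  set a := ctr x i - ctr x j
  set b := ctr y i - ctr y j
  have hrad : 2 * rm ≤ ‖a‖ := hcx ▸ two_mul_le_of_mem_AgSet hσ hx i j
  have ha : a ≠ 0 := norm_pos_iff.mp (by linarith)
  have hb : b ≠ 0 := norm_pos_iff.mp (by linarith [hcy ▸ two_mul_le_of_mem_AgSet hσ hy i j])
  have hδ0 : 0 ≤ δ := (norm_nonneg _).trans hxy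
  have hdir_x : ctrDir σ i j x = ‖a‖⁻¹ • a := by rw [ctrDir, hcx]
  have hdir_y : ctrDir σ i j y = ‖b‖⁻¹ • b := by rw [ctrDir, hcy]
  have hδ' : √2 * δ ≤ rm * ((1 + σ ^ 2) * (1 - c)) := by
    have := mul_le_mul_of_nonneg_left hδ (Real.sqrt_nonneg 2)
    rwa [div_mul_eq_mul_div, mul_div_cancel₀ _ (by positivity), mul_assoc] at this
  have hclose : 1 - ⟪ctrDir σ i j y, ctrDir σ i j x⟫ ≤ (1 + σ ^ 2) * (1 - c) :=
    calc 1 - ⟪ctrDir σ i j y, ctrDir σ i j x⟫ = 1 - ⟪‖a‖⁻¹ • a, ‖b‖⁻¹ • b⟫ := by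
          rw [hdir_x, hdir_y, real_inner_comm]
      _ ≤ ‖‖a‖⁻¹ • a - ‖b‖⁻¹ • b‖ :=
          one_sub_inner_le_norm_sub (norm_smul_inv_norm ha) (norm_smul_inv_norm hb)
      _ ≤ 2 * ‖a - b‖ / ‖a‖ := norm_inv_norm_smul_sub_le ha b
      _ ≤ 2 * (√2 * δ) / (2 * rm) := by
          gcongr
          exact (norm_ctr_sub_sub_le x y hij).trans (by gcongr)
      _ ≤ (1 + σ ^ 2) * (1 - c) := by
          rw [mul_div_mul_left _ _ two_ne_zero, div_le_iff₀ hrm]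
          linarith
  rw [inner_nvec σ hij, ge_iff_le, le_div_iff₀ (by positivity)]
  linarith

theorem statement7 (n : ℕ) (hn : 2 ≤ n) (σ : ℝ) (hσ : 0 < σ) (rm rp : ℝ)
    (hrm : 0 < rm) (hrmp : rm < rp) (i j : Fin n) (hij : i ≠ j)
    (β : ℝ) (hβ0 : 0 < β) (hβ1 : β < 1) (δ : ℝ) (hδ0 : 0 < δ)
    (hδ : δ ≤ rm * (1 + σ ^ 2) / Real.sqrt 2 * (1 - Real.sqrt (1 - β ^ 2)))
    (x y : Conf n) (hx : x ∈ AgSet σ rm rp n) (hy : y ∈ AgSet σ rm rp n)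
    (hcx : ‖ctr x i - ctr x j‖ = σ * (rad x i + rad x j))
    (hcy : ‖ctr y i - ctr y j‖ = σ * (rad y i + rad y j))
    (hxy : ‖x - y‖ ≤ δ) :
    ⟪nvec σ i j y, nvec σ i j x⟫ ≥ Real.sqrt (1 - β ^ 2) :=
  statement7_general n σ hσ rm rp hrm i j hij β δ hδ x y hx hy hcx hcy hxy
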